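/- Let P ∈ ℂ[[t]] have constant coefficient 1 and let n ≥ 1. Then there exists a unique power series Q ∈ ℂ[[t]] with constant coefficient 1 such that Q(t^n) = ∏_{ζ : ζ^n = 1} P(ζ·t), where the product is over all complex n-th roots of unity ζ. Moreover, for every m ≥ 1 the ghost coordinates satisfy gh_m(Q) = gh_{mn}(P). (The series Q is denoted Fr_n(P), the n-th Frobenius of P.) -/

import Mathlib

/-!
For a primitive `n`-th root of unity `ω`, the product `R(t) = ∏_{ζⁿ=1} P(ζt)` is unchanged by
`t ↦ ωt`, so only powers of `tⁿ` occur in it and `R(t) = Q(tⁿ)` for exactly one `Q`.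
The ghost coordinates are the coefficients of the logarithmic derivative `θP = t·P'/P`, which
turns products into sums, commutes with `t ↦ ζt` and satisfies `θ(Q(tⁿ)) = n·(θQ)(tⁿ)`.
Comparing the coefficients of `t^{mn}` in `θ(Q(tⁿ)) = ∑_ζ (θP)(ζt)` gives
`n·gh_m(Q) = n·gh_{mn}(P)`, since `ζ^{mn} = 1`.
-/

noncomputable section

/-- Substitution `t ↦ tⁿ` in a power series: `(substPow n Q)(t) = Q(tⁿ)`. -/
def substPow (n : ℕ) (Q : PowerSeries ℂ) : PowerSeries ℂ :=
  PowerSeries.mk fun j => if n ∣ j then PowerSeries.coeff (j / n) Q else 0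

/-- The `m`-th ghost coordinate of a power series `P` (with constant coefficient `1`)
over `ℂ`: the `m`-th coefficient of `t·P'(t)/P(t)`. -/
def ghost (m : ℕ) (P : PowerSeries ℂ) : ℂ :=
  PowerSeries.coeff m (PowerSeries.X * P.derivativeFun * P⁻¹)

namespace PowerSeries

section Expand

variable {R : Type*} [CommRing R] {n : ℕ} (hn : n ≠ 0)

theorem expand_injective : Function.Injective (expand n hn : R⟦X⟧ → R⟦X⟧) := fun f g h => by
  ext m
  rw [← coeff_expand_mul n hn f, ← coeff_expand_mul n hn g, h]

theorem expand_mk_coeff_mul {f : R⟦X⟧} (hf : ∀ j, ¬ n ∣ j → coeff j f = 0) :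
    expand n hn (mk fun m => coeff (n * m) f) = f := by
  ext j
  rw [coeff_expand]
  split_ifs with hj
  · rw [coeff_mk, Nat.mul_div_cancel' hj]
  · exact (hf j hj).symm

theorem X_mul_derivative_expand (f : R⟦X⟧) :
    X * d⁄dX R (expand n hn f) = (n : R) • expand n hn (X * d⁄dX R f) := by
  rw [expand_apply, derivative_subst (HasSubst.X_pow hn), derivative_pow, derivative_X,
    map_mul, expand_X, expand_apply, smul_eq_C_mul, map_natCast, ← mul_pow_sub_one hn X]
  ring

end Expand

theorem constantCoeff_rescale {R : Type*} [CommSemiring R] (a : R) (f : R⟦X⟧) :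
    constantCoeff (rescale a f) = constantCoeff f := by
  rw [← coeff_zero_eq_constantCoeff_apply, coeff_rescale, pow_zero, one_mul,
    coeff_zero_eq_constantCoeff_apply]

theorem X_mul_derivative_rescale {R : Type*} [CommSemiring R] (a : R) (f : R⟦X⟧) :
    X * d⁄dX R (rescale a f) = rescale a (X * d⁄dX R f) := by
  ext k
  cases k with
  | zero => rw [coeff_zero_X_mul, coeff_rescale, coeff_zero_X_mul, mul_zero]
  | succ k => simp only [coeff_succ_X_mul, coeff_derivative, coeff_rescale]; ring

theorem coeff_eq_zero_of_rescale_eq_self {K : Type*} [CommRing K] [IsDomain K] {ω : K} {n : ℕ}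
    (hω : IsPrimitiveRoot ω n) {f : K⟦X⟧} (hf : rescale ω f = f) {j : ℕ} (hj : ¬ n ∣ j) :
    coeff j f = 0 := by
  have hfix : ω ^ j * coeff j f = coeff j f := by rw [← coeff_rescale, hf]
  by_contra hne
  exact hj ((hω.pow_eq_one_iff_dvd j).mp (mul_right_cancel₀ hne (hfix.trans (one_mul _).symm)))

theorem rescale_nthRoots_prod_rescale {K : Type*} [CommRing K] [IsDomain K] {ω : K} {n : ℕ}
    (hω : IsPrimitiveRoot ω n) (hn : 0 < n) (f : K⟦X⟧) :
    rescale ω ((Polynomial.nthRoots n (1 : K)).map fun ζ => rescale ζ f).prod =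
      ((Polynomial.nthRoots n (1 : K)).map fun ζ => rescale ζ f).prod := by
  have hperm : (Polynomial.nthRoots n (1 : K)).map (· * ω) = Polynomial.nthRoots n 1 := by
    refine Multiset.Nodup.ext (hω.nthRoots_one_nodup.map
      (mul_left_injective₀ (hω.ne_zero hn.ne'))) hω.nthRoots_one_nodup |>.mpr fun ζ => ?_
    simp only [Multiset.mem_map, Polynomial.mem_nthRoots hn]
    constructor
    · rintro ⟨ξ, hξ, rfl⟩
      rw [mul_pow, hξ, hω.pow_eq_one, one_mul]
    · refine fun hζ => ⟨ζ * ω ^ (n - 1), ?_, ?_⟩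
      · rw [mul_pow, hζ, one_mul, ← pow_mul, mul_comm, pow_mul, hω.pow_eq_one, one_pow]
      · rw [mul_assoc, ← pow_succ, Nat.sub_add_cancel hn, hω.pow_eq_one, mul_one]
  rw [map_multiset_prod, Multiset.map_map]
  conv_rhs => rw [← hperm, Multiset.map_map]
  simp only [Function.comp_def, rescale_rescale]

section Ghost

variable {K : Type*} [Field K]

def ghostSeries (P : K⟦X⟧) : K⟦X⟧ :=
  X * d⁄dX K P * P⁻¹

theorem mul_ghostSeries {P : K⟦X⟧} (hP : constantCoeff P ≠ 0) :
    P * ghostSeries P = X * d⁄dX K P := by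
  rw [ghostSeries, mul_comm, mul_assoc, PowerSeries.inv_mul_cancel P hP, mul_one]

theorem ghostSeries_eq_of_mul_eq {P G : K⟦X⟧} (hP : constantCoeff P ≠ 0)
    (h : P * G = X * d⁄dX K P) : ghostSeries P = G := by
  rw [ghostSeries, ← h, mul_comm P, mul_assoc, PowerSeries.mul_inv_cancel P hP, mul_one]

theorem ghostSeries_one : ghostSeries (1 : K⟦X⟧) = 0 := by
  rw [ghostSeries, derivative_one, mul_zero, zero_mul]

theorem ghostSeries_mul {A B : K⟦X⟧} (hA : constantCoeff A ≠ 0) (hB : constantCoeff B ≠ 0) :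
    ghostSeries (A * B) = ghostSeries A + ghostSeries B := by
  refine ghostSeries_eq_of_mul_eq (by simp [hA, hB]) ?_
  rw [Derivation.leibniz, smul_eq_mul, smul_eq_mul]
  linear_combination B * mul_ghostSeries hA + A * mul_ghostSeries hB

theorem ghostSeries_multiset_prod (s : Multiset K⟦X⟧) (hs : ∀ f ∈ s, constantCoeff f ≠ 0) :
    ghostSeries s.prod = (s.map ghostSeries).sum := by
  induction s using Multiset.induction_on with
  | empty => simp [ghostSeries_one]
  | cons f s ih =>
    have hs' : ∀ g ∈ s, constantCoeff g ≠ 0 := fun g hg => hs g (Multiset.mem_cons_of_mem hg)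
    rw [Multiset.prod_cons, Multiset.map_cons, Multiset.sum_cons, ← ih hs',
      ghostSeries_mul (hs f (Multiset.mem_cons_self f s))]
    rw [map_multiset_prod]
    exact Multiset.prod_ne_zero (by simpa using hs')

theorem ghostSeries_rescale {P : K⟦X⟧} (hP : constantCoeff P ≠ 0) (a : K) :
    ghostSeries (rescale a P) = rescale a (ghostSeries P) :=
  ghostSeries_eq_of_mul_eq (by rwa [constantCoeff_rescale]) <| by
    rw [← map_mul, mul_ghostSeries hP, X_mul_derivative_rescale]

theorem ghostSeries_expand {P : K⟦X⟧} (hP : constantCoeff P ≠ 0) {n : ℕ} (hn : n ≠ 0) :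
    ghostSeries (expand n hn P) = (n : K) • expand n hn (ghostSeries P) :=
  ghostSeries_eq_of_mul_eq (by rwa [constantCoeff_expand]) <| by
    rw [mul_smul_comm, ← map_mul, mul_ghostSeries hP, X_mul_derivative_expand]

theorem coeff_ghostSeries_nthRoots_prod_rescale {ω : K} {n : ℕ} (hω : IsPrimitiveRoot ω n)
    (hn : 0 < n) {P : K⟦X⟧} (hP : constantCoeff P ≠ 0) (m : ℕ) :
    coeff (n * m) (ghostSeries ((Polynomial.nthRoots n (1 : K)).map fun ζ => rescale ζ P).prod) =
      n * coeff (n * m) (ghostSeries P) := by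
  rw [ghostSeries_multiset_prod _ (by simpa [constantCoeff_rescale] using fun _ _ => hP),
    Multiset.map_map, map_multiset_sum, Multiset.map_map]
  have hterm : ∀ ζ ∈ Polynomial.nthRoots n (1 : K),
      (coeff (n * m) ∘ ghostSeries ∘ fun ζ => rescale ζ P) ζ = coeff (n * m) (ghostSeries P) := by
    intro ζ hζ
    simp only [Function.comp_apply, ghostSeries_rescale hP, coeff_rescale, pow_mul,
      (Polynomial.mem_nthRoots hn).mp hζ, one_pow, one_mul]
  rw [Multiset.map_congr rfl hterm, Multiset.map_const', Multiset.sum_replicate,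
    hω.card_nthRoots_one, nsmul_eq_mul]

end Ghost

end PowerSeries

open PowerSeries

theorem substPow_eq_expand {n : ℕ} (hn : n ≠ 0) : substPow n = expand n hn := by
  ext Q j
  rw [substPow, coeff_mk, coeff_expand]

theorem ghost_eq_coeff_ghostSeries (m : ℕ) (P : ℂ⟦X⟧) : ghost m P = coeff m (ghostSeries P) :=
  rfl

/-- **Existence and uniqueness of the Frobenius `Fr_n`.**
Let `P ∈ ℂ⟦t⟧` have constant coefficient `1` and let `n ≥ 1`.  Then there exists a
unique power series `Q ∈ ℂ⟦t⟧` with constant coefficient `1` such that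
`Q(tⁿ) = ∏_{ζⁿ=1} P(ζ t)` (product over all complex `n`-th roots of unity).
Moreover, for every `m ≥ 1` one has `gh_m(Q) = gh_{mn}(P)`. -/
theorem frobenius_exists_unique_and_ghost
    (P : PowerSeries ℂ) (hP : PowerSeries.constantCoeff P = 1)
    (n : ℕ) (hn : 1 ≤ n) :
    (∃! Q : PowerSeries ℂ, PowerSeries.constantCoeff Q = 1 ∧
        substPow n Q =
          ((Polynomial.nthRoots n (1 : ℂ)).map fun ζ => PowerSeries.rescale ζ P).prod) ∧
    (∀ Q : PowerSeries ℂ, PowerSeries.constantCoeff Q = 1 →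
        substPow n Q =
          ((Polynomial.nthRoots n (1 : ℂ)).map fun ζ => PowerSeries.rescale ζ P).prod →
        ∀ m : ℕ, 1 ≤ m → ghost m Q = ghost (m * n) P) := by
  have hn0 : n ≠ 0 := Nat.one_le_iff_ne_zero.mp hn
  have hω := Complex.isPrimitiveRoot_exp n hn0
  have hP0 : constantCoeff P ≠ 0 := hP ▸ one_ne_zero
  set R := ((Polynomial.nthRoots n (1 : ℂ)).map fun ζ => rescale ζ P).prod
  have hR : constantCoeff R = 1 := by
    simp [R, map_multiset_prod, constantCoeff_rescale, hP]
  have hQ₀ : expand n hn0 (mk fun m => coeff (n * m) R) = R :=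
    expand_mk_coeff_mul hn0 fun j =>
      coeff_eq_zero_of_rescale_eq_self hω (rescale_nthRoots_prod_rescale hω hn P)
  rw [substPow_eq_expand hn0]
  refine ⟨⟨_, ⟨?_, hQ₀⟩, fun Q hQ => expand_injective hn0 (hQ.2.trans hQ₀.symm)⟩, ?_⟩
  · rw [← constantCoeff_expand n hn0, hQ₀, hR]
  intro Q hQ hQR m _
  refine mul_left_cancel₀ (Nat.cast_ne_zero.mpr hn0 : (n : ℂ) ≠ 0) ?_
  calc (n : ℂ) * ghost m Q = coeff (n * m) (ghostSeries (expand n hn0 Q)) := by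
        rw [ghostSeries_expand (hQ ▸ one_ne_zero), coeff_smul, coeff_expand_mul,
          ghost_eq_coeff_ghostSeries, smul_eq_mul]
    _ = n * ghost (m * n) P := by
        rw [hQR, coeff_ghostSeries_nthRoots_prod_rescale hω hn hP0,
          mul_comm m, ghost_eq_coeff_ghostSeries]

end
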